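/- arXiv:2202.10249 — 2 statements merged into one kernel-verified Lean document; each statement's English description precedes it below -/
import Mathlib

section
/- Let ξ > 0 and n ≥ 1. A real number λ satisfies det(M_n(ξ) − λ·I) = 0 if and only if λ = (4/ξ)·sin²(pπ/(2(n+1))) for some p ∈ {1, …, n}; moreover these n values are pairwise distinct, so M_n(ξ) has exactly n distinct real eigenvalues, namely λ_p = (4/ξ)·sin²(pπ/(2(n+1))) for p = 1, …, n. -/
open Matrix Real Polynomial

/-- The `n × n` real tridiagonal matrix with diagonal entries `2/ξ` and
off-diagonal entries `-1/ξ`. -/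
noncomputable def rouseMatrix (ξ : ℝ) (n : ℕ) : Matrix (Fin n) (Fin n) ℝ :=
  Matrix.of fun i j =>
    if (i : ℕ) = (j : ℕ) then 2 / ξ
    else if (i : ℕ) + 1 = (j : ℕ) ∨ (j : ℕ) + 1 = (i : ℕ) then -1 / ξ
    else 0

lemma myEvalCharpoly {n : ℕ} (M : Matrix (Fin n) (Fin n) ℝ) (lam : ℝ) :
    M.charpoly.eval lam = (lam • (1 : Matrix (Fin n) (Fin n) ℝ) - M).det := by
  rw [Matrix.charpoly, ← Polynomial.coe_evalRingHom, RingHom.map_det]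
  congr 1
  ext i j
  by_cases h : i = j <;>
    simp [h, charmatrix_apply_eq, charmatrix_apply_ne, Matrix.one_apply, Matrix.smul_apply]

lemma sumIte {n : ℕ} (c : ℕ) (f : ℕ → ℝ) :
    ∑ j : Fin n, (if (j : ℕ) = c then f (j : ℕ) else 0) = if c < n then f c else 0 := by
  by_cases h : c < n
  · rw [if_pos h, Finset.sum_eq_single (⟨c, h⟩ : Fin n)]
    · simp
    · intro b _ hb
      rw [if_neg]
      intro hbc
      exact hb (Fin.ext hbc)
    · simp
  · rw [if_neg h, Finset.sum_eq_zero]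
    intro b _
    rw [if_neg]
    intro hb
    exact h (hb ▸ b.isLt)

lemma tri_mulVec (ξ : ℝ) (n : ℕ) (w : ℕ → ℝ) (hw0 : w 0 = 0) (hwn : w (n + 1) = 0)
    (i : Fin n) :
    (rouseMatrix ξ n *ᵥ fun j : Fin n => w ((j : ℕ) + 1)) i
      = 2 / ξ * w ((i : ℕ) + 1) + (-1 / ξ) * w (i : ℕ) + (-1 / ξ) * w ((i : ℕ) + 2) := by
  have key : ∀ j : Fin n,
      rouseMatrix ξ n i j * w ((j : ℕ) + 1)
        = (if (j : ℕ) = (i : ℕ) then 2 / ξ * w ((i : ℕ) + 1) else 0)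
          + (if (j : ℕ) = (i : ℕ) + 1 then (-1 / ξ) * w ((i : ℕ) + 2) else 0)
          + (if (i : ℕ) ≥ 1 ∧ (j : ℕ) = (i : ℕ) - 1 then (-1 / ξ) * w (i : ℕ) else 0) := by
    intro j
    rcases Nat.lt_trichotomy (j : ℕ) (i : ℕ) with h | h | h
    · by_cases h2 : (j : ℕ) + 1 = (i : ℕ)
      · rw [if_neg (by omega), if_neg (by omega), if_pos (by omega)]
        simp only [rouseMatrix, Matrix.of_apply]
        rw [if_neg (by omega), if_pos (Or.inr h2)]
        rw [show (j : ℕ) + 1 = (i : ℕ) from h2]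
        ring
      · rw [if_neg (by omega), if_neg (by omega), if_neg (by omega)]
        simp only [rouseMatrix, Matrix.of_apply]
        rw [if_neg (by omega), if_neg (by omega)]
        ring
    · rw [if_pos h, if_neg (by omega), if_neg (by omega)]
      simp only [rouseMatrix, Matrix.of_apply]
      rw [if_pos h.symm, h]
      ring
    · by_cases h2 : (i : ℕ) + 1 = (j : ℕ)
      · rw [if_neg (by omega), if_pos (by omega), if_neg (by omega)]
        simp only [rouseMatrix, Matrix.of_apply]
        rw [if_neg (by omega), if_pos (Or.inl h2)]
        rw [show (j : ℕ) + 1 = (i : ℕ) + 2 by omega]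
        ring
      · rw [if_neg (by omega), if_neg (by omega), if_neg (by omega)]
        simp only [rouseMatrix, Matrix.of_apply]
        rw [if_neg (by omega), if_neg (by omega)]
        ring
  rw [Matrix.mulVec, dotProduct]
  calc (∑ j : Fin n, rouseMatrix ξ n i j * w ((j : ℕ) + 1))
      = ∑ j : Fin n, ((if (j : ℕ) = (i : ℕ) then 2 / ξ * w ((i : ℕ) + 1) else 0)
          + (if (j : ℕ) = (i : ℕ) + 1 then (-1 / ξ) * w ((i : ℕ) + 2) else 0)
          + (if (i : ℕ) ≥ 1 ∧ (j : ℕ) = (i : ℕ) - 1 then (-1 / ξ) * w (i : ℕ) else 0)) := by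
        exact Finset.sum_congr rfl fun j _ => key j
    _ = 2 / ξ * w ((i : ℕ) + 1) + (-1 / ξ) * w (i : ℕ) + (-1 / ξ) * w ((i : ℕ) + 2) := by
        rw [Finset.sum_add_distrib, Finset.sum_add_distrib]
        rw [sumIte (n := n) (i : ℕ) (fun _ => 2 / ξ * w ((i : ℕ) + 1)),
            sumIte (n := n) ((i : ℕ) + 1) (fun _ => (-1 / ξ) * w ((i : ℕ) + 2))]
        by_cases h1 : (i : ℕ) ≥ 1
        · simp only [h1, true_and]
          rw [sumIte (n := n) ((i : ℕ) - 1) (fun _ => (-1 / ξ) * w (i : ℕ))]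
          rw [if_pos i.isLt, if_pos (show (i : ℕ) - 1 < n by omega)]
          by_cases h2 : (i : ℕ) + 1 < n
          · rw [if_pos (show (i : ℕ) + 1 < n from h2)]; ring
          · rw [if_neg (show ¬ (i : ℕ) + 1 < n from h2),
              show (i : ℕ) + 2 = n + 1 by omega, hwn]; ring
        · simp only [h1, false_and, if_false, Finset.sum_const_zero]
          rw [if_pos i.isLt, show (i : ℕ) = 0 by omega, hw0]
          by_cases h2 : 0 + 1 < n
          · rw [if_pos (show 0 + 1 < n from h2)]; ring
          · rw [if_neg (show ¬ 0 + 1 < n from h2), show 0 + 2 = n + 1 by omega, hwn]; ring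

/-- The eigenvalue function. -/
noncomputable def rouseEig (ξ : ℝ) (n : ℕ) (p : ℕ) : ℝ :=
  (4 / ξ) * Real.sin ((p : ℝ) * π / (2 * (n + 1))) ^ 2

lemma rouseEig_eq (ξ : ℝ) (hξ : 0 < ξ) (n p : ℕ) :
    rouseEig ξ n p = (2 - 2 * Real.cos ((p : ℝ) * π / (n + 1))) / ξ := by
  have hn : ((n : ℝ) + 1) ≠ 0 := by positivity
  set x : ℝ := (p : ℝ) * π / (2 * (n + 1)) with hx
  have h2x : (p : ℝ) * π / (n + 1) = 2 * x := by rw [hx]; field_simp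
  rw [rouseEig, h2x, Real.cos_two_mul]
  have hsc := Real.sin_sq_add_cos_sq x
  have hξ' : ξ ≠ 0 := ne_of_gt hξ
  field_simp
  nlinarith [hsc]

lemma det_eigen (ξ : ℝ) (hξ : 0 < ξ) (n : ℕ) (p : ℕ) (hp : p ∈ Finset.Icc 1 n) :
    (rouseMatrix ξ n - rouseEig ξ n p • (1 : Matrix (Fin n) (Fin n) ℝ)).det = 0 := by
  obtain ⟨hp1, hpn⟩ := Finset.mem_Icc.mp hp
  set θ : ℝ := (p : ℝ) * π / (n + 1) with hθ
  have hn1 : (0 : ℝ) < (n : ℝ) + 1 := by positivity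
  have hθpos : 0 < θ := by
    apply div_pos _ hn1
    have : (0 : ℝ) < (p : ℝ) := by exact_mod_cast hp1
    positivity
  have hθlt : θ < π := by
    rw [hθ, div_lt_iff₀ hn1]
    have hplt : (p : ℝ) < (n : ℝ) + 1 := by exact_mod_cast Nat.lt_succ_of_le hpn
    nlinarith [Real.pi_pos]
  set w : ℕ → ℝ := fun k => Real.sin ((k : ℝ) * θ) with hw
  have hw0 : w 0 = 0 := by simp [hw]
  have hwn : w (n + 1) = 0 := by
    have : ((n : ℝ) + 1) * θ = (p : ℝ) * π := by
      rw [hθ]; field_simp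
    simp only [hw, Nat.cast_add, Nat.cast_one, this]
    exact_mod_cast Real.sin_nat_mul_pi p
  set v : Fin n → ℝ := fun j => w ((j : ℕ) + 1) with hv
  have hvne : v ≠ 0 := by
    have h1n : 0 < n := hp1.trans hpn
    intro hcontra
    have := congrFun hcontra ⟨0, h1n⟩
    simp only [hv, hw, Pi.zero_apply] at this
    have : Real.sin θ = 0 := by simpa using this
    exact (Real.sin_pos_of_pos_of_lt_pi hθpos hθlt).ne' this
  rw [← Matrix.exists_mulVec_eq_zero_iff]
  refine ⟨v, hvne, ?_⟩
  funext i
  have hmv := tri_mulVec ξ n w hw0 hwn i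
  have htrig : 2 / ξ * w ((i : ℕ) + 1) + (-1 / ξ) * w (i : ℕ) + (-1 / ξ) * w ((i : ℕ) + 2)
      = rouseEig ξ n p * w ((i : ℕ) + 1) := by
    rw [rouseEig_eq ξ hξ n p, ← hθ]
    simp only [hw]
    rw [show ((i : ℕ) : ℝ) * θ = (((i : ℕ) + 1 : ℕ) : ℝ) * θ - θ by push_cast; ring,
      show (((i : ℕ) + 2 : ℕ) : ℝ) * θ = (((i : ℕ) + 1 : ℕ) : ℝ) * θ + θ by push_cast; ring,
      Real.sin_sub, Real.sin_add]
    field_simp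
    ring
  rw [Matrix.sub_mulVec, Matrix.smul_mulVec, Matrix.one_mulVec]
  simp only [Pi.sub_apply, Pi.smul_apply, Pi.zero_apply, smul_eq_mul]
  rw [hmv, htrig]
  simp [hv]

lemma eig_injOn (ξ : ℝ) (hξ : 0 < ξ) (n : ℕ) :
    Set.InjOn (rouseEig ξ n) (Set.Icc 1 n) := by
  have hmono : StrictMonoOn (rouseEig ξ n) (Set.Icc 1 n) := by
    intro p hp q hq hpq
    obtain ⟨hp1, hpn⟩ := hp
    obtain ⟨hq1, hqn⟩ := hq
    have hn1 : (0 : ℝ) < 2 * ((n : ℝ) + 1) := by positivity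
    set x : ℝ := (p : ℝ) * π / (2 * (n + 1)) with hx
    set y : ℝ := (q : ℝ) * π / (2 * (n + 1)) with hy
    have hxpos : 0 < x := by
      apply div_pos _ hn1
      have : (0 : ℝ) < (p : ℝ) := by exact_mod_cast hp1
      positivity
    have hxy : x < y := by
      rw [hx, hy, div_lt_div_iff₀ hn1 hn1]
      have hpq' : (p : ℝ) < (q : ℝ) := by exact_mod_cast hpq
      exact mul_lt_mul_of_pos_right (mul_lt_mul_of_pos_right hpq' Real.pi_pos) hn1
    have hyle : y < π / 2 := by
      rw [hy, div_lt_iff₀ hn1]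
      have : (q : ℝ) < (n : ℝ) + 1 := by exact_mod_cast Nat.lt_succ_of_le hqn
      nlinarith [Real.pi_pos]
    have hsin : Real.sin x < Real.sin y := by
      apply Real.strictMonoOn_sin ⟨by linarith [Real.pi_pos], le_of_lt (hxy.trans hyle)⟩
        ⟨by linarith [Real.pi_pos, hxpos, hxy], le_of_lt hyle⟩ hxy
    have hsx : 0 < Real.sin x := Real.sin_pos_of_pos_of_lt_pi hxpos
      (by linarith [Real.pi_pos])
    have : Real.sin x ^ 2 < Real.sin y ^ 2 := by nlinarith
    have h4 : (0 : ℝ) < 4 / ξ := by positivity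
    simp only [rouseEig]
    exact (mul_lt_mul_iff_right₀ h4).mpr this
  exact hmono.injOn

lemma det_iff_root (ξ : ℝ) (n : ℕ) (lam : ℝ) :
    (rouseMatrix ξ n - lam • (1 : Matrix (Fin n) (Fin n) ℝ)).det = 0 ↔
      (rouseMatrix ξ n).charpoly.eval lam = 0 := by
  rw [myEvalCharpoly]
  rw [show rouseMatrix ξ n - lam • (1 : Matrix (Fin n) (Fin n) ℝ)
      = -(lam • (1 : Matrix (Fin n) (Fin n) ℝ) - rouseMatrix ξ n) from (neg_sub _ _).symm]
  rw [Matrix.det_neg]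
  simp [pow_ne_zero, sub_eq_zero]

lemma det_forward (ξ : ℝ) (hξ : 0 < ξ) (n : ℕ) (lam : ℝ)
    (h : (rouseMatrix ξ n - lam • (1 : Matrix (Fin n) (Fin n) ℝ)).det = 0) :
    ∃ p ∈ Finset.Icc 1 n, lam = rouseEig ξ n p := by
  set f := (rouseMatrix ξ n).charpoly with hf
  have hmonic : f.Monic := (rouseMatrix ξ n).charpoly_monic
  have hfne : f ≠ 0 := hmonic.ne_zero
  have hdeg : f.natDegree = n := by
    rw [hf, Matrix.charpoly_natDegree_eq_dim, Fintype.card_fin]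
  set S : Finset ℝ := (Finset.Icc 1 n).image (rouseEig ξ n) with hS
  have hScard : S.card = n := by
    rw [hS, Finset.card_image_of_injOn (by rw [Finset.coe_Icc]; exact eig_injOn ξ hξ n),
      Nat.card_Icc]
    omega
  have hSroots : ∀ x ∈ S, x ∈ f.roots.toFinset := by
    intro x hx
    obtain ⟨p, hp, rfl⟩ := Finset.mem_image.mp hx
    rw [Multiset.mem_toFinset, Polynomial.mem_roots hfne]
    exact (det_iff_root ξ n _).mp (det_eigen ξ hξ n p hp)
  by_contra hcon
  push_neg at hcon
  have hlamS : lam ∉ S := by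
    rw [hS, Finset.mem_image]
    rintro ⟨p, hp, rfl⟩
    exact hcon p hp rfl
  have hlamroot : lam ∈ f.roots.toFinset := by
    rw [Multiset.mem_toFinset, Polynomial.mem_roots hfne]
    exact (det_iff_root ξ n lam).mp h
  have hsub : insert lam S ⊆ f.roots.toFinset := by
    intro x hx
    rcases Finset.mem_insert.mp hx with rfl | hx
    · exact hlamroot
    · exact hSroots x hx
  have h1 : (insert lam S).card = n + 1 := by rw [Finset.card_insert_of_notMem hlamS, hScard]
  have h2 : (insert lam S).card ≤ f.roots.toFinset.card := Finset.card_le_card hsub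
  have h3 : f.roots.toFinset.card ≤ Multiset.card f.roots := f.roots.toFinset_card_le
  have h4 : Multiset.card f.roots ≤ f.natDegree := f.card_roots'
  omega

theorem rouseMatrix_eigenvalues (ξ : ℝ) (hξ : 0 < ξ) (n : ℕ) (hn : 1 ≤ n) :
    (∀ lam : ℝ,
      (rouseMatrix ξ n - lam • (1 : Matrix (Fin n) (Fin n) ℝ)).det = 0 ↔
        ∃ p ∈ Finset.Icc 1 n,
          lam = (4 / ξ) * Real.sin ((p : ℝ) * π / (2 * (n + 1))) ^ 2) ∧
    Set.InjOn (fun p : ℕ => (4 / ξ) * Real.sin ((p : ℝ) * π / (2 * (n + 1))) ^ 2)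
      (Finset.Icc 1 n) ∧
    spectrum ℝ (rouseMatrix ξ n) =
      (fun p : ℕ => (4 / ξ) * Real.sin ((p : ℝ) * π / (2 * (n + 1))) ^ 2) ''
        (Set.Icc 1 n) ∧
    (spectrum ℝ (rouseMatrix ξ n)).ncard = n := by
  have hpart1 : ∀ lam : ℝ,
      (rouseMatrix ξ n - lam • (1 : Matrix (Fin n) (Fin n) ℝ)).det = 0 ↔
        ∃ p ∈ Finset.Icc 1 n, lam = rouseEig ξ n p := by
    intro lam
    constructor
    · exact det_forward ξ hξ n lam
    · rintro ⟨p, hp, rfl⟩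
      exact det_eigen ξ hξ n p hp
  have hspec : ∀ lam : ℝ, lam ∈ spectrum ℝ (rouseMatrix ξ n) ↔
      (rouseMatrix ξ n - lam • (1 : Matrix (Fin n) (Fin n) ℝ)).det = 0 := by
    intro lam
    rw [spectrum.mem_iff, Algebra.algebraMap_eq_smul_one, Matrix.isUnit_iff_isUnit_det,
      isUnit_iff_ne_zero, not_not]
    rw [show lam • (1 : Matrix (Fin n) (Fin n) ℝ) - rouseMatrix ξ n
      = -(rouseMatrix ξ n - lam • (1 : Matrix (Fin n) (Fin n) ℝ)) from (neg_sub _ _).symm]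
    rw [Matrix.det_neg]
    simp
  have hspecEq : spectrum ℝ (rouseMatrix ξ n) = rouseEig ξ n '' Set.Icc 1 n := by
    ext lam
    rw [hspec lam, hpart1 lam]
    simp only [Set.mem_image, Set.mem_Icc, Finset.mem_Icc]
    constructor
    · rintro ⟨p, hp, rfl⟩; exact ⟨p, hp, rfl⟩
    · rintro ⟨p, hp, rfl⟩; exact ⟨p, hp, rfl⟩
  refine ⟨hpart1, ?_, ?_, ?_⟩
  · rw [Finset.coe_Icc]; exact eig_injOn ξ hξ n
  · exact hspecEq
  · rw [hspecEq, Set.ncard_image_of_injOn (eig_injOn ξ hξ n), ← Finset.coe_Icc,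
      Set.ncard_coe_finset, Nat.card_Icc]
    omega
end

section
/- Let ξ > 0 and let f : [0, 4/ξ] → ℝ be continuous. Then lim_{n→∞} (1/n)·∑_{p=1}^{n} f((4/ξ)·sin²(pπ/(2(n+1)))) = (1/π)·∫_0^π f((4/ξ)·sin²(k/2)) dk, and moreover (1/π)·∫_0^π f((4/ξ)·sin²(k/2)) dk = (ξ/(4π))·∫_0^{4/ξ} f(λ) / √((ξλ/4)·(1 − ξλ/4)) dλ. In particular, the empirical distribution of the eigenvalues λ_p = (4/ξ)·sin²(pπ/(2(n+1))) of the n × n tridiagonal Toeplitz matrix M_n(ξ) converges to the density proportional to ξ/√((ξλ/4)(1 − ξλ/4)) on (0, 4/ξ). -/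
/-!
The averages are Riemann sums of `k ↦ f ((4/ξ) sin² (k/2))` on `[0, π]` for the uniform grid of
mesh `π/(n+1)`, missing only the endpoint term, which is `O(1/n)`; they converge by uniform
continuity. The second identity is the substitution `λ = (4/ξ) sin² (k/2)`, for which
`dλ = (2/ξ) sin k dk` and `√((ξλ/4)(1 - ξλ/4)) = (sin k)/2`.
-/

open Real Filter MeasureTheory intervalIntegral

theorem abs_mul_sub_integral_le {g : ℝ → ℝ} {u v c ε : ℝ} (huv : u ≤ v)
    (hg : IntervalIntegrable g volume u v) (h : ∀ x ∈ Set.Ioc u v, |c - g x| ≤ ε) :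
    |(v - u) * c - ∫ x in u..v, g x| ≤ ε * (v - u) := by
  have hconst : (v - u) * c = ∫ _ in u..v, c := by simp
  rw [hconst, ← integral_sub intervalIntegrable_const hg]
  simpa [abs_of_nonneg (sub_nonneg.2 huv)] using
    norm_integral_le_of_norm_le_const (C := ε) (f := fun x => c - g x) (a := u) (b := v)
      (by simpa [Set.uIoc_of_le huv] using h)

theorem abs_riemannSum_sub_integral_le {g : ℝ → ℝ} {a b δ ε : ℝ} {m : ℕ} (hm : 0 < m)
    (hab : a ≤ b) (hg : ContinuousOn g (Set.Icc a b)) (hδ : (b - a) / m ≤ δ)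
    (hunif : ∀ x ∈ Set.Icc a b, ∀ y ∈ Set.Icc a b, dist x y ≤ δ → dist (g x) (g y) ≤ ε) :
    |(b - a) / m * ∑ i ∈ Finset.range m, g (a + (i + 1) * ((b - a) / m)) -
      ∫ x in a..b, g x| ≤ ε * (b - a) := by
  set h := (b - a) / m with h_def
  have hm' : (0 : ℝ) < m := by exact_mod_cast hm
  have hh : 0 ≤ h := div_nonneg (sub_nonneg.2 hab) hm'.le
  set x : ℕ → ℝ := fun i => a + i * h with hx
  have hx_succ (i : ℕ) : x (i + 1) = x i + h := by simp only [hx]; push_cast; ring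
  have hx_mem {i : ℕ} (hi : i ≤ m) : x i ∈ Set.Icc a b := by
    refine ⟨le_add_of_nonneg_right (by positivity), ?_⟩
    calc a + i * h ≤ a + m * h := by gcongr
      _ = b := by rw [h_def]; field_simp; ring
  have hcell {i : ℕ} (hi : i < m) : Set.Icc (x i) (x (i + 1)) ⊆ Set.Icc a b :=
    Set.Icc_subset_Icc (hx_mem hi.le).1 (hx_mem hi).2
  have hint {i : ℕ} (hi : i < m) : IntervalIntegrable g volume (x i) (x (i + 1)) := by
    refine (hg.mono ?_).intervalIntegrable
    rw [Set.uIcc_of_le (by rw [hx_succ]; linarith)]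
    exact hcell hi
  have hsplit : ∫ y in a..b, g y = ∑ i ∈ Finset.range m, ∫ y in x i..x (i + 1), g y := by
    have hx0 : x 0 = a := by simp [hx]
    have hxm : x m = b := by simp only [hx]; rw [h_def]; field_simp; ring
    rw [sum_integral_adjacent_intervals (a := x) fun i hi => hint hi, hx0, hxm]
  have hcell_bound {i : ℕ} (hi : i < m) :
      |h * g (a + (i + 1) * h) - ∫ y in x i..x (i + 1), g y| ≤ ε * h := by
    have hnode : a + (i + 1) * h = x (i + 1) := by simp only [hx]; push_cast; ring
    have hlen : x (i + 1) - x i = h := by rw [hx_succ]; ring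
    rw [hnode, ← hlen]
    refine abs_mul_sub_integral_le (by linarith) (hint hi) fun y hy => ?_
    have hy' : y ∈ Set.Icc a b := hcell hi ⟨hy.1.le, hy.2⟩
    have hdist : dist (x (i + 1)) y ≤ δ := by
      rw [Real.dist_eq, abs_of_nonneg (by linarith [hy.2])]
      linarith [hy.1, hx_succ i]
    simpa [Real.dist_eq] using hunif _ (hx_mem hi) _ hy' hdist
  rw [hsplit, Finset.mul_sum, ← Finset.sum_sub_distrib]
  calc _ ≤ ∑ i ∈ Finset.range m, |h * g (a + (i + 1) * h) - ∫ y in x i..x (i + 1), g y| :=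
        Finset.abs_sum_le_sum_abs _ _
    _ ≤ ∑ _i ∈ Finset.range m, ε * h :=
        Finset.sum_le_sum fun i hi => hcell_bound (Finset.mem_range.1 hi)
    _ = ε * (b - a) := by rw [Finset.sum_const, Finset.card_range, nsmul_eq_mul, h_def]; field_simp

theorem tendsto_riemannSum_integral {g : ℝ → ℝ} {a b : ℝ} (hab : a ≤ b)
    (hg : ContinuousOn g (Set.Icc a b)) :
    Tendsto (fun m : ℕ => (b - a) / m * ∑ i ∈ Finset.range m, g (a + (i + 1) * ((b - a) / m)))
      atTop (nhds (∫ x in a..b, g x)) := by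
  rw [Metric.tendsto_atTop]
  intro ε hε
  obtain ⟨δ, hδ, hunif⟩ := Metric.uniformContinuousOn_iff_le.1
    (isCompact_Icc.uniformContinuousOn_of_continuous hg) (ε / (b - a + 1)) (by
      have : 0 < b - a + 1 := by linarith
      positivity)
  obtain ⟨N, hN⟩ := exists_nat_gt ((b - a) / δ)
  refine ⟨N, fun m hm => ?_⟩
  have hm' : (b - a) / δ < m := hN.trans_le (by exact_mod_cast hm)
  have hm_pos : (0 : ℝ) < m := lt_of_le_of_lt (div_nonneg (sub_nonneg.2 hab) hδ.le) hm'
  have hmesh : (b - a) / m ≤ δ := by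
    rw [div_le_iff₀ hm_pos]; rw [div_lt_iff₀ hδ] at hm'; linarith
  rw [Real.dist_eq]
  calc _ ≤ ε / (b - a + 1) * (b - a) :=
        abs_riemannSum_sub_integral_le (by exact_mod_cast hm_pos) hab hg hmesh hunif
    _ < ε := by
        rw [div_mul_eq_mul_div, div_lt_iff₀ (by linarith)]
        nlinarith

theorem tendsto_average_interior_nodes {g : ℝ → ℝ} {a b : ℝ} (hab : a < b)
    (hg : ContinuousOn g (Set.Icc a b)) :
    Tendsto
      (fun n : ℕ => 1 / (n : ℝ) * ∑ p ∈ Finset.Icc 1 n, g (a + p * ((b - a) / (n + 1))))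
      atTop (nhds (1 / (b - a) * ∫ x in a..b, g x)) := by
  have hriemann := (tendsto_riemannSum_integral hab.le hg).comp (tendsto_add_atTop_nat 1)
  have hlast : Tendsto (fun n : ℕ => (b - a) / (n + 1) * g b) atTop (nhds 0) := by
    simpa using (tendsto_const_nhds (x := b - a)).div_atTop
      (tendsto_natCast_atTop_atTop.atTop_add tendsto_const_nhds) |>.mul_const (g b)
  have hratio :
      Tendsto (fun n : ℕ => ((n : ℝ) + 1) / n / (b - a)) atTop (nhds (1 / (b - a))) := by
    simpa [inv_div] using
      ((tendsto_natCast_div_add_atTop (1 : ℝ)).inv₀ one_ne_zero).div_const (b - a)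
  have hlim := hratio.mul (hriemann.sub hlast)
  rw [sub_zero] at hlim
  refine hlim.congr' ?_
  filter_upwards [eventually_ge_atTop 1] with n hn
  have hsum : ∑ i ∈ Finset.range (n + 1), g (a + (i + 1) * ((b - a) / (n + 1)))
      = ∑ p ∈ Finset.Icc 1 n, g (a + p * ((b - a) / (n + 1))) + g b := by
    have hb : a + ((n : ℝ) + 1) * ((b - a) / (n + 1)) = b := by field_simp; ring
    rw [Finset.sum_range_succ, hb, ← Finset.Ico_add_one_right_eq_Icc,
      Finset.sum_Ico_eq_sum_range, Nat.add_sub_cancel]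
    push_cast
    simp only [add_comm (1 : ℝ)]
  simp only [Function.comp_apply, Nat.cast_add, Nat.cast_one, hsum]
  generalize ∑ p ∈ Finset.Icc 1 n, g (a + p * ((b - a) / (n + 1))) = S
  have hn' : (n : ℝ) ≠ 0 := by positivity
  have hba : b - a ≠ 0 := by linarith
  field_simp
  ring

theorem hasDerivAt_mul_sin_half_sq (c k : ℝ) :
    HasDerivAt (fun k => c * sin (k / 2) ^ 2) (c / 2 * sin k) k := by
  refine (((((hasDerivAt_id k).div_const 2).sin).pow 2).const_mul c).congr_deriv ?_
  rw [show sin k = sin (2 * (k / 2)) by ring_nf, sin_two_mul]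
  simp only [Nat.cast_ofNat, id_eq, Nat.add_one_sub_one, pow_one, one_div]
  ring

theorem sqrt_sin_half_sq_mul_one_sub (k : ℝ) :
    √(sin (k / 2) ^ 2 * (1 - sin (k / 2) ^ 2)) = |sin k| / 2 := by
  rw [← cos_sq', ← mul_pow, sqrt_sq_eq_abs, show sin k = sin (2 * (k / 2)) by ring_nf,
    sin_two_mul, mul_assoc, abs_mul 2, abs_two]
  ring

/-- `integral_Icc_deriv_smul_of_deriv_nonneg` also covers non-integrable `f`, where both sides are
the junk value `0`. -/
theorem integral_div_sqrt_eq_integral_sin_half_sq {ξ : ℝ} (hξ : 0 < ξ) (f : ℝ → ℝ) :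
    ∫ lam in (0 : ℝ)..(4 / ξ), f lam / √((ξ * lam / 4) * (1 - ξ * lam / 4))
      = 4 / ξ * ∫ k in (0 : ℝ)..π, f (4 / ξ * sin (k / 2) ^ 2) := by
  set c := 4 / ξ with hc
  set φ : ℝ → ℝ := fun k => c * sin (k / 2) ^ 2
  set G : ℝ → ℝ := fun lam => f lam / √((ξ * lam / 4) * (1 - ξ * lam / 4))
  have hsubst := integral_Icc_deriv_smul_of_deriv_nonneg (g := G) (f := φ)
    (f' := fun k => c / 2 * sin k) (by fun_prop) (fun k _ => hasDerivAt_mul_sin_half_sq c k)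
    (fun k hk => by have := sin_pos_of_pos_of_lt_pi hk.1 hk.2; positivity) pi_pos.le
  have hφ0 : φ 0 = 0 := by simp [φ]
  have hφπ : φ π = c := by simp [φ]
  rw [hφ0, hφπ] at hsubst
  have hpt : ∀ k ∈ Set.Ioo 0 π, (c / 2 * sin k) • G (φ k) = c * f (φ k) := by
    intro k hk
    have hsin := sin_pos_of_pos_of_lt_pi hk.1 hk.2
    have hscale : ξ * φ k / 4 = sin (k / 2) ^ 2 := by simp only [φ, hc]; field_simp
    simp only [G, smul_eq_mul, hscale, sqrt_sin_half_sq_mul_one_sub, abs_of_pos hsin]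
    field_simp
  calc ∫ lam in (0 : ℝ)..c, G lam = ∫ lam in Set.Icc 0 c, G lam := by
        rw [integral_of_le (by positivity), integral_Icc_eq_integral_Ioc]
    _ = ∫ k in Set.Ioo 0 π, (c / 2 * sin k) • G (φ k) := by
        rw [← hsubst, integral_Icc_eq_integral_Ioo]
    _ = ∫ k in Set.Ioo 0 π, c * f (φ k) := setIntegral_congr_fun measurableSet_Ioo hpt
    _ = c * ∫ k in (0 : ℝ)..π, f (φ k) := by
        rw [integral_of_le pi_pos.le, integral_Ioc_eq_integral_Ioo,
          MeasureTheory.integral_const_mul]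

theorem toeplitz_spectral_distribution (ξ : ℝ) (hξ : 0 < ξ) (f : ℝ → ℝ)
    (hf : ContinuousOn f (Set.Icc 0 (4 / ξ))) :
    Filter.Tendsto
      (fun n : ℕ =>
        (1 / (n : ℝ)) *
          ∑ p ∈ Finset.Icc 1 n, f ((4 / ξ) * Real.sin ((p : ℝ) * π / (2 * (n + 1))) ^ 2))
      Filter.atTop
      (nhds ((1 / π) * ∫ k in (0 : ℝ)..π, f ((4 / ξ) * Real.sin (k / 2) ^ 2))) ∧
    (1 / π) * (∫ k in (0 : ℝ)..π, f ((4 / ξ) * Real.sin (k / 2) ^ 2)) =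
      (ξ / (4 * π)) *
        ∫ lam in (0 : ℝ)..(4 / ξ),
          f lam / Real.sqrt ((ξ * lam / 4) * (1 - ξ * lam / 4)) := by
  constructor
  · have hF : ContinuousOn (fun k => f (4 / ξ * sin (k / 2) ^ 2)) (Set.Icc 0 π) :=
      hf.comp (by fun_prop) fun k _ =>
        ⟨by positivity, mul_le_of_le_one_right (by positivity) (sin_sq_le_one _)⟩
    have h := tendsto_average_interior_nodes pi_pos hF
    simp only [sub_zero, zero_add] at h
    refine h.congr fun n => ?_
    congr 1
    refine Finset.sum_congr rfl fun p _ => ?_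
    rw [show (p : ℝ) * (π / (n + 1)) / 2 = p * π / (2 * (n + 1)) by field_simp]
  · rw [integral_div_sqrt_eq_integral_sin_half_sq hξ]
    field_simp
end
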